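/- Let λ1 be a real number and let P be a polynomial in one real variable t satisfying t·P^{(j+1)}(t) + (j+1)·λ1·P^{(j)}(t) = 0 for every integer j ≥ 1 and all t. Then either P is constant, or λ1 = 0 and P has degree at most 1. Conversely, all such polynomials are solutions. -/
import Mathlib


open Polynomial

/-- The unary case of Kirillov's system on the line: a polynomial `P` satisfies
`t P⁽ʲ⁺¹⁾(t) + (j+1) λ₁ P⁽ʲ⁾(t) = 0` for all `j ≥ 1` iff `P` is constant, or
`λ₁ = 0` and `deg P ≤ 1`. -/
theorem kirillov_unary_solutions (lam1 : ℝ) (P : Polynomial ℝ) :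
    (∀ j : ℕ, 1 ≤ j →
      X * ((fun Q : Polynomial ℝ => derivative Q)^[j + 1] P)
        + C ((j + 1 : ℝ) * lam1) * ((fun Q : Polynomial ℝ => derivative Q)^[j] P) = 0)
    ↔ (P.natDegree = 0 ∨ (lam1 = 0 ∧ P.natDegree ≤ 1)) := by
  have hfun : (fun Q : Polynomial ℝ => derivative Q) = ⇑(derivative (R := ℝ)) := rfl
  constructor
  · intro h
    by_cases hn : P.natDegree = 0
    · exact Or.inl hn
    · right
      set n := P.natDegree with hndef
      have hn1 : 1 ≤ n := Nat.one_le_iff_ne_zero.mpr hn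
      -- derivative^[n] P ≠ 0
      have hne : (fun Q : Polynomial ℝ => derivative Q)^[n] P ≠ 0 := by
        rw [hfun]
        intro h0
        have hc : ((derivative (R := ℝ))^[n] P).coeff 0 = 0 := by rw [h0]; simp
        rw [coeff_iterate_derivative] at hc
        simp only [zero_add, nsmul_eq_mul, Nat.descFactorial_self] at hc
        have hlc : P.coeff n ≠ 0 := by
          have hP0 : P ≠ 0 := fun hP => hn (by rw [hndef, hP, natDegree_zero])
          rw [hndef]
          exact leadingCoeff_ne_zero.mpr hP0
        have hfac : (n.factorial : ℝ) ≠ 0 := Nat.cast_ne_zero.mpr (Nat.factorial_ne_zero n)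
        rcases mul_eq_zero.mp hc with h1 | h1
        · exact hfac h1
        · exact hlc h1
      have hz : (fun Q : Polynomial ℝ => derivative Q)^[n + 1] P = 0 := by
        rw [hfun]; exact iterate_derivative_eq_zero (Nat.lt_succ_self n)
      have heq := h n hn1
      rw [hz, mul_zero, zero_add] at heq
      have hlam : lam1 = 0 := by
        rcases mul_eq_zero.mp heq with h1 | h1
        · have := C_eq_zero.mp h1
          rcases mul_eq_zero.mp this with h2 | h2
          · exact absurd h2 (by positivity)
          · exact h2
        · exact absurd h1 hne
      refine ⟨hlam, ?_⟩
      -- from j = 1 : X * P'' = 0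
      have h1 := h 1 le_rfl
      rw [hlam, mul_zero, map_zero, zero_mul, add_zero] at h1
      have h2 : (fun Q : Polynomial ℝ => derivative Q)^[2] P = 0 := by
        rcases mul_eq_zero.mp h1 with hx | hq
        · exact absurd hx X_ne_zero
        · exact hq
      by_contra hge
      push_neg at hge
      apply hne
      rw [show n = (n - 2) + 2 by omega, Function.iterate_add_apply, h2, hfun]
      exact iterate_derivative_zero
  · rintro (h0 | ⟨hlam, hdeg⟩) <;> intro j hj
    · have h1 : (fun Q : Polynomial ℝ => derivative Q)^[j] P = 0 := by
        rw [hfun]; exact iterate_derivative_eq_zero (by omega)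
      have h2 : (fun Q : Polynomial ℝ => derivative Q)^[j + 1] P = 0 := by
        rw [hfun]; exact iterate_derivative_eq_zero (by omega)
      rw [h1, h2, mul_zero, mul_zero, add_zero]
    · have h2 : (fun Q : Polynomial ℝ => derivative Q)^[j + 1] P = 0 := by
        rw [hfun]; exact iterate_derivative_eq_zero (by omega)
      rw [h2, hlam, mul_zero, mul_zero, map_zero, zero_mul, zero_add]
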